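/- Let A₁,…,A_k be quasi S-primary C-hyperideals of a commutative multiplicative hyperring G and A a hyperideal of G with A ⊆ ⋃_{i=1}^k A_i. Then there exists t ∈ S and some 1 ≤ j ≤ k such that t∘A ⊆ rad(A_j). -/

import Mathlib

open Set

/-- A commutative multiplicative hyperring: a commutative additive group with a
commutative, associative hyperoperation `hmul` satisfying `(-a)∘b = -(a∘b)`,
weak distributivity, and having an identity element `e` with `a ∈ e∘a`. -/
class MulHyperring (G : Type*) extends AddCommGroup G where
  hmul : G → G → Set G
  hmul_nonempty : ∀ a b : G, (hmul a b).Nonempty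
  hmul_comm : ∀ a b : G, hmul a b = hmul b a
  hmul_assoc : ∀ a b c : G, (⋃ x ∈ hmul a b, hmul x c) = ⋃ x ∈ hmul b c, hmul a x
  neg_hmul : ∀ a b : G, hmul (-a) b = (fun x => -x) '' (hmul a b)
  hmul_add : ∀ a b c : G,
    hmul a (b + c) ⊆ {x | ∃ u ∈ hmul a b, ∃ v ∈ hmul a c, x = u + v}
  e : G
  e_mem : ∀ a : G, a ∈ hmul e a

namespace MulHyperring

variable {G : Type*} [MulHyperring G]

/-- Hyperproduct of an element with a set: `a ∘ B = ⋃ b ∈ B, a ∘ b`. -/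
def smulSet (a : G) (B : Set G) : Set G := ⋃ b ∈ B, hmul a b

/-- Hyperproduct of two sets. -/
def setMul (A B : Set G) : Set G := ⋃ a ∈ A, ⋃ b ∈ B, hmul a b

/-- Hyperproduct `a₁ ∘ a₂ ∘ ⋯ ∘ aₙ` of a (nonempty) list of elements. -/
def hProd : List G → Set G
  | [] => ∅
  | [a] => {a}
  | a :: b :: l => smulSet a (hProd (b :: l))

/-- `aⁿ` as a hyperproduct. -/
def hPow (a : G) (n : ℕ) : Set G := hProd (List.replicate n a)

/-- `A` is a hyperideal of `G`. -/
def IsHyperideal (A : Set G) : Prop :=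
  A.Nonempty ∧ (∀ x ∈ A, ∀ y ∈ A, x - y ∈ A) ∧ ∀ r : G, ∀ x ∈ A, hmul r x ⊆ A

/-- `A` is a `C`-hyperideal: any finite hyperproduct meeting `A` is contained in `A`. -/
def IsCHyperideal (A : Set G) : Prop :=
  IsHyperideal A ∧ ∀ l : List G, l ≠ [] → (hProd l ∩ A).Nonempty → hProd l ⊆ A

/-- The radical of a (C-)hyperideal: `{a | aⁿ ⊆ A for some n ≥ 1}`. -/
def rad (A : Set G) : Set G := {a | ∃ n : ℕ, 1 ≤ n ∧ hPow a n ⊆ A}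

/-- The hyperideal generated by a set. -/
def idealGen (X : Set G) : Set G := ⋂₀ {A | IsHyperideal A ∧ X ⊆ A}

/-- The hyperideal product of two hyperideals. -/
def idealMul (A B : Set G) : Set G := idealGen (setMul A B)

/-- Multiplicative closed subset. -/
def IsMCS (S : Set G) : Prop :=
  e ∈ S ∧ ∀ s₁ ∈ S, ∀ s₂ ∈ S, (hmul s₁ s₂ ∩ S).Nonempty

/-- Prime hyperideal. -/
def IsPrime (P : Set G) : Prop :=
  IsHyperideal P ∧ P ≠ univ ∧ ∀ x y : G, hmul x y ⊆ P → x ∈ P ∨ y ∈ P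

/-- `S`-prime hyperideal. -/
def IsSPrime (S A : Set G) : Prop :=
  IsHyperideal A ∧ A ∩ S = ∅ ∧
    ∃ t ∈ S, ∀ u v : G, hmul u v ⊆ A → hmul t u ⊆ A ∨ hmul t v ⊆ A

/-- `S`-primary hyperideal. -/
def IsSPrimary (S A : Set G) : Prop :=
  IsHyperideal A ∧ A ∩ S = ∅ ∧
    ∃ t ∈ S, ∀ u v : G, hmul u v ⊆ A → hmul t u ⊆ A ∨ hmul t v ⊆ rad A

/-- Quasi `S`-primary hyperideal. -/
def IsQuasiSPrimary (S A : Set G) : Prop :=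
  IsHyperideal A ∧ A ∩ S = ∅ ∧
    ∃ t ∈ S, ∀ u v : G, hmul u v ⊆ A → hmul t u ⊆ rad A ∨ hmul t v ⊆ rad A

/-- Weakly quasi `S`-primary hyperideal. -/
def IsWeaklyQuasiSPrimary (S A : Set G) : Prop :=
  IsHyperideal A ∧ A ∩ S = ∅ ∧
    ∃ t ∈ S, ∀ u v : G, 0 ∉ hmul u v → hmul u v ⊆ A →
      hmul t u ⊆ rad A ∨ hmul t v ⊆ rad A

/-- Strongly quasi `S`-primary hyperideal. -/
def IsStronglyQuasiSPrimary (S A : Set G) : Prop :=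
  IsHyperideal A ∧ A ∩ S = ∅ ∧
    ∃ t ∈ S, ∀ u v : G, hmul u v ⊆ A →
      smulSet t (hPow u 2) ⊆ A ∨ hmul t v ⊆ rad A

/-- The residual `(B : x) = {y | y ∘ x ⊆ B}`. -/
def colon (B : Set G) (x : G) : Set G := {y | hmul y x ⊆ B}

end MulHyperring

/-!
For each `i` fix a witness `tᵢ ∈ S` of quasi `S`-primality of `Aᵢ`. The radical `rad Aᵢ` is a
hyperideal (every term of the expansion of `(x - y) ^ (m + n)` lies in `Aᵢ`), and because `Aᵢ` is a
`C`-hyperideal, `tᵢ` still witnesses the `S`-prime condition on `rad Aᵢ`. This makes the residual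
`Pᵢ = (rad Aᵢ : tᵢ)` a prime hyperideal; it contains `Aᵢ` since `x ∘ x ⊆ Aᵢ` for `x ∈ Aᵢ`.
Prime avoidance puts `B` inside some `Pⱼ`, which says `tⱼ ∘ B ⊆ rad Aⱼ`.
-/

lemma List.flatten_replicate_pair_perm {α : Type*} (n : ℕ) (u v : α) :
    (List.replicate n [u, v]).flatten.Perm (List.replicate n u ++ List.replicate n v) := by
  induction n with
  | zero => simp
  | succ n ih =>
    rw [List.replicate_succ, List.flatten_cons, List.replicate_succ, List.replicate_succ]
    refine (ih.append_left [u, v]).trans ?_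
    exact (List.perm_middle (l₁ := List.replicate n u)).symm.cons u

namespace MulHyperring

variable {G : Type*} [MulHyperring G]

lemma mem_smulSet {a z : G} {X : Set G} : z ∈ smulSet a X ↔ ∃ x ∈ X, z ∈ hmul a x := by
  simp [smulSet]

lemma mem_hmul_hmul_comm {a b x z : G} {w : G} (hw : w ∈ hmul b x) (hz : z ∈ hmul a w) :
    ∃ v ∈ hmul a x, z ∈ hmul b v := by
  have h : z ∈ ⋃ y ∈ hmul b x, hmul a y := mem_biUnion hw hz
  rw [← hmul_assoc, hmul_comm a b, hmul_assoc] at h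
  simpa using h

lemma smulSet_comm (a b : G) (X : Set G) :
    smulSet a (smulSet b X) = smulSet b (smulSet a X) := by
  have key : ∀ a b : G, smulSet a (smulSet b X) ⊆ smulSet b (smulSet a X) := by
    intro a b z hz
    obtain ⟨w, hw, hz⟩ := mem_smulSet.mp hz
    obtain ⟨x, hx, hw⟩ := mem_smulSet.mp hw
    obtain ⟨v, hv, hz⟩ := mem_hmul_hmul_comm hw hz
    exact mem_smulSet.mpr ⟨v, mem_smulSet.mpr ⟨x, hx, hv⟩, hz⟩
  exact (key a b).antisymm (key b a)

lemma hProd_cons (a : G) {l : List G} (hl : l ≠ []) : hProd (a :: l) = smulSet a (hProd l) := by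
  cases l with
  | nil => exact absurd rfl hl
  | cons b m => rfl

lemma hProd_pair (u v : G) : hProd [u, v] = hmul u v := by
  simp [hProd, smulSet]

lemma hProd_nonempty {l : List G} (hl : l ≠ []) : (hProd l).Nonempty := by
  induction l with
  | nil => exact absurd rfl hl
  | cons a m ih =>
    rcases eq_or_ne m [] with rfl | hm
    · exact ⟨a, rfl⟩
    · obtain ⟨x, hx⟩ := ih hm
      obtain ⟨z, hz⟩ := hmul_nonempty a x
      exact ⟨z, by rw [hProd_cons a hm]; exact mem_smulSet.mpr ⟨x, hx, hz⟩⟩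

lemma hProd_perm {l m : List G} (h : l.Perm m) : hProd l = hProd m := by
  induction h with
  | nil => rfl
  | @cons a l₁ l₂ h ih =>
    rcases eq_or_ne l₁ [] with rfl | hl₁
    · rw [h.nil_eq]
    · have hl₂ : l₂ ≠ [] := fun he => hl₁ ((he ▸ h).eq_nil)
      rw [hProd_cons a hl₁, hProd_cons a hl₂, ih]
  | swap a b l =>
    rcases eq_or_ne l [] with rfl | hl
    · rw [hProd_pair, hProd_pair, hmul_comm]
    · rw [hProd_cons b (List.cons_ne_nil _ _), hProd_cons a hl, hProd_cons a (List.cons_ne_nil _ _),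
        hProd_cons b hl, smulSet_comm]
  | trans _ _ ih₁ ih₂ => rw [ih₁, ih₂]

lemma hmul_subset_hProd_append {l m : List G} {x y : G} (hx : x ∈ hProd l) (hy : y ∈ hProd m)
    (hm : m ≠ []) : hmul x y ⊆ hProd (l ++ m) := by
  induction l generalizing x with
  | nil => simp [hProd] at hx
  | cons a l ih =>
    rcases eq_or_ne l [] with rfl | hl
    · rw [show x = a from hx, List.singleton_append, hProd_cons a hm]
      exact subset_biUnion_of_mem hy
    · rw [hProd_cons a hl] at hx
      obtain ⟨w, hw, hx⟩ := mem_smulSet.mp hx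
      intro z hz
      have h : z ∈ ⋃ v ∈ hmul a w, hmul v y := mem_biUnion hx hz
      rw [hmul_assoc] at h
      obtain ⟨v, hv, hz⟩ := mem_iUnion₂.mp h
      rw [List.cons_append, hProd_cons a (by simp [hl])]
      exact mem_smulSet.mpr ⟨v, ih hw hv, hz⟩

lemma hPow_one (a : G) : hPow a 1 = {a} := rfl

lemma hPow_succ (a : G) {n : ℕ} (hn : 1 ≤ n) : hPow a (n + 1) = smulSet a (hPow a n) :=
  hProd_cons a (by simp; omega)

lemma hPow_nonempty (a : G) {n : ℕ} (hn : 1 ≤ n) : (hPow a n).Nonempty :=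
  hProd_nonempty (by simp; omega)

lemma hPow_subset_hProd_flatten {l : List G} (hl : l ≠ []) {z : G} (hz : z ∈ hProd l) {n : ℕ}
    (hn : 1 ≤ n) : hPow z n ⊆ hProd (List.replicate n l).flatten := by
  induction n, hn using Nat.le_induction with
  | base => simpa [hPow_one] using hz
  | succ n hn ih =>
    rw [hPow_succ z hn, List.replicate_succ, List.flatten_cons]
    refine iUnion₂_subset fun x hx => hmul_subset_hProd_append hz (ih hx) ?_
    cases n with
    | zero => omega
    | succ n => simp [List.replicate_succ, hl]

lemma hPow_subset_of_mem_hmul {u v z : G} (hz : z ∈ hmul u v) {n : ℕ} (hn : 1 ≤ n) :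
    hPow z n ⊆ hProd (List.replicate n u ++ List.replicate n v) := by
  rw [← hProd_perm (List.flatten_replicate_pair_perm n u v)]
  exact hPow_subset_hProd_flatten (by simp) (by rwa [hProd_pair]) hn

lemma smulSet_subset_iff {a : G} {X Y : Set G} : smulSet a X ⊆ Y ↔ ∀ x ∈ X, hmul a x ⊆ Y :=
  iUnion₂_subset_iff

lemma mem_colon_iff {P : Set G} {t x : G} : x ∈ colon P t ↔ hmul t x ⊆ P := by
  rw [← hmul_comm]; rfl

lemma smulSet_subset_iff_subset_colon {P X : Set G} {t : G} :
    smulSet t X ⊆ P ↔ X ⊆ colon P t := by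
  rw [smulSet_subset_iff]
  exact forall₂_congr fun _ _ => mem_colon_iff.symm

lemma subset_rad (A : Set G) : A ⊆ rad A := fun a ha =>
  ⟨1, le_rfl, by rw [hPow_one]; exact singleton_subset_iff.mpr ha⟩

namespace IsHyperideal

variable {A : Set G} (hA : IsHyperideal A)
include hA

lemma zero_mem : (0 : G) ∈ A := by
  obtain ⟨a, ha⟩ := hA.1
  simpa using hA.2.1 a ha a ha

lemma sub_mem {x y : G} (hx : x ∈ A) (hy : y ∈ A) : x - y ∈ A := hA.2.1 x hx y hy

lemma neg_mem {x : G} (hx : x ∈ A) : -x ∈ A := by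
  simpa using hA.sub_mem hA.zero_mem hx

lemma add_mem {x y : G} (hx : x ∈ A) (hy : y ∈ A) : x + y ∈ A := by
  simpa using hA.sub_mem hx (hA.neg_mem hy)

lemma hmul_subset (r : G) {x : G} (hx : x ∈ A) : hmul r x ⊆ A := hA.2.2 r x hx

lemma smulSet_subset (r : G) {X : Set G} (hX : X ⊆ A) : smulSet r X ⊆ A :=
  iUnion₂_subset fun _ hx => hA.hmul_subset r (hX hx)

lemma inter {B : Set G} (hB : IsHyperideal B) : IsHyperideal (A ∩ B) :=
  ⟨⟨0, hA.zero_mem, hB.zero_mem⟩, fun _ hx _ hy => ⟨hA.sub_mem hx.1 hy.1, hB.sub_mem hx.2 hy.2⟩,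
    fun r _ hx => subset_inter (hA.hmul_subset r hx.1) (hB.hmul_subset r hx.2)⟩

lemma hProd_append_subset (l : List G) {m : List G} (hm : m ≠ []) (h : hProd m ⊆ A) :
    hProd (l ++ m) ⊆ A := by
  induction l with
  | nil => exact h
  | cons a l ih =>
    rw [List.cons_append, hProd_cons a (by simp [hm])]
    exact hA.smulSet_subset a ih

lemma hProd_subset_of_subperm {l m : List G} (hml : m.Subperm l) (hm : m ≠ [])
    (h : hProd m ⊆ A) : hProd l ⊆ A := by
  obtain ⟨m', hm'm, hm'l⟩ := hml
  obtain ⟨r, hr⟩ := hm'l.exists_perm_append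
  rw [hProd_perm (hr.trans ((hm'm.append_right r).trans List.perm_append_comm))]
  exact hA.hProd_append_subset r hm h

lemma add_hmul_subset {x y t : G} (hx : hmul x t ⊆ A) (hy : hmul y t ⊆ A) :
    hmul (x + y) t ⊆ A := by
  rw [hmul_comm]
  intro z hz
  obtain ⟨p, hp, q, hq, rfl⟩ := hmul_add t x y hz
  rw [hmul_comm] at hx hy
  exact hA.add_mem (hx hp) (hy hq)

lemma neg_hmul_subset {x t : G} (hx : hmul x t ⊆ A) : hmul (-x) t ⊆ A := by
  rw [neg_hmul]
  rintro _ ⟨z, hz, rfl⟩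
  exact hA.neg_mem (hx hz)

lemma subset_colon (t : G) : A ⊆ colon A t := fun _ hx => by
  rw [mem_colon_iff]; exact hA.hmul_subset t hx

lemma colon (t : G) : IsHyperideal (colon A t) := by
  refine ⟨hA.1.mono (hA.subset_colon t), fun x hx y hy => ?_, fun r x hx => ?_⟩
  · rw [sub_eq_add_neg]
    exact hA.add_hmul_subset hx (hA.neg_hmul_subset hy)
  · intro z hz
    show hmul z t ⊆ A
    refine (subset_biUnion_of_mem (u := fun w => hmul w t) hz).trans ?_
    rw [hmul_assoc]
    exact hA.smulSet_subset r hx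

lemma hPow_add_subset (a c : G) {k : ℕ} (hk : 1 ≤ k)
    (h : ∀ i j, i + j = k → hProd (List.replicate i a ++ List.replicate j c) ⊆ A) :
    hPow (a + c) k ⊆ A := by
  induction k, hk using Nat.le_induction generalizing A with
  | base =>
    have ha := h 1 0 rfl
    have hc := h 0 1 rfl
    simp only [List.replicate, List.append_nil, List.nil_append, hProd,
      singleton_subset_iff] at ha hc
    simpa [hPow_one] using hA.add_mem ha hc
  | succ k hk ih =>
    -- The induction hypothesis is applied to the hyperideal `(A : a) ∩ (A : c)`.
    have hA' := (hA.colon a).inter (hA.colon c)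
    have hk' := ih hA' fun i j hij w hw => by
      have hL : List.replicate i a ++ List.replicate j c ≠ [] := by
        simp only [ne_eq, List.append_eq_nil_iff, List.replicate_eq_nil_iff]; omega
      refine ⟨mem_colon_iff.mpr ?_, mem_colon_iff.mpr ?_⟩
      · refine (subset_biUnion_of_mem (u := hmul a) hw).trans (?_ : smulSet a _ ⊆ A)
        rw [← hProd_cons a hL]
        exact h (i + 1) j (by omega)
      · refine (subset_biUnion_of_mem (u := hmul c) hw).trans (?_ : smulSet c _ ⊆ A)
        rw [← hProd_cons c hL, ← hProd_perm List.perm_middle, ← List.replicate_succ]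
        exact h i (j + 1) (by omega)
    rw [hPow_succ _ hk, smulSet_subset_iff]
    intro w hw
    exact hA.add_hmul_subset (mem_colon_iff.mp (hk' hw).1) (mem_colon_iff.mp (hk' hw).2)

lemma hmul_subset_rad (r : G) {x : G} (hx : x ∈ rad A) : hmul r x ⊆ rad A := by
  obtain ⟨n, hn, hxn⟩ := hx
  refine fun w hw => ⟨n, hn, (hPow_subset_of_mem_hmul hw hn).trans ?_⟩
  exact hA.hProd_subset_of_subperm (List.sublist_append_right _ _).subperm (by simp; omega) hxn

lemma neg_mem_rad {x : G} (hx : x ∈ rad A) : -x ∈ rad A :=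
  hA.hmul_subset_rad (-e) hx (by rw [neg_hmul]; exact ⟨x, e_mem x, rfl⟩)

lemma sub_mem_rad {x y : G} (hx : x ∈ rad A) (hy : y ∈ rad A) : x - y ∈ rad A := by
  obtain ⟨m, hm, hxm⟩ := hx
  obtain ⟨n, hn, hyn⟩ := hA.neg_mem_rad hy
  refine ⟨m + n, by omega, ?_⟩
  rw [sub_eq_add_neg]
  refine hA.hPow_add_subset x (-y) (by omega) fun i j hij => ?_
  rcases le_or_gt m i with hi | hi
  · exact hA.hProd_subset_of_subperm
      (((List.replicate_sublist_replicate x).mpr hi).trans (List.sublist_append_left _ _)).subperm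
      (by simp; omega) hxm
  · exact hA.hProd_subset_of_subperm
      (((List.replicate_sublist_replicate (-y)).mpr (by omega)).trans
        (List.sublist_append_right _ _)).subperm (by simp; omega) hyn

lemma rad : IsHyperideal (rad A) :=
  ⟨hA.1.mono (subset_rad A), fun _ hx _ hy => hA.sub_mem_rad hx hy,
    fun r _ hx => hA.hmul_subset_rad r hx⟩

end IsHyperideal

namespace IsCHyperideal

variable {A : Set G} (hA : IsCHyperideal A)
include hA

lemma rad_rad_subset : rad (rad A) ⊆ rad A := by
  rintro z ⟨k, hk, hzk⟩
  obtain ⟨w, hw⟩ := hPow_nonempty z hk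
  obtain ⟨n, hn, hwn⟩ := hzk hw
  have hzl : List.replicate k z ≠ [] := by simp; omega
  refine ⟨n * k, Nat.one_le_iff_ne_zero.mpr (by positivity), ?_⟩
  rw [hPow, ← List.flatten_replicate_replicate]
  obtain ⟨v, hv⟩ := hPow_nonempty w hn
  exact hA.2 _ (by simp; omega) ⟨v, hPow_subset_hProd_flatten hzl hw hn hv, hwn hv⟩

lemma hmul_subset_rad_of_smulSet_hPow {t u : G} {m : ℕ} (hm : 1 ≤ m)
    (h : smulSet t (hPow u m) ⊆ rad A) : hmul t u ⊆ rad A := by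
  refine fun w hw => hA.rad_rad_subset ⟨m, hm, (hPow_subset_of_mem_hmul hw hm).trans ?_⟩
  obtain ⟨m, rfl⟩ := Nat.exists_eq_add_of_le' hm
  refine hA.1.rad.hProd_subset_of_subperm
    ((List.sublist_append_right _ _).cons_cons t).subperm (List.cons_ne_nil _ _) ?_
  rwa [hProd_cons t (by simp)]

lemma hmul_subset_rad_or_of_hmul_subset_rad {t : G}
    (hq : ∀ u v : G, hmul u v ⊆ A → hmul t u ⊆ rad A ∨ hmul t v ⊆ rad A)
    {u v : G} (huv : hmul u v ⊆ rad A) : hmul t u ⊆ rad A ∨ hmul t v ⊆ rad A := by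
  obtain ⟨z, hz⟩ := hmul_nonempty u v
  obtain ⟨m, hm, hzm⟩ := huv hz
  have hne : ∀ w : G, List.replicate m w ≠ [] := by simp; omega
  -- The `C`-property spreads `z ^ m ⊆ A` to the whole product `u ^ m ∘ v ^ m`.
  have hprod : hProd (List.replicate m u ++ List.replicate m v) ⊆ A := by
    obtain ⟨y, hy⟩ := hPow_nonempty z hm
    exact hA.2 _ (by simp [hne]) ⟨y, hPow_subset_of_mem_hmul hz hm hy, hzm hy⟩
  have hxy : ∀ x ∈ hPow u m, ∀ y ∈ hPow v m, hmul x y ⊆ A := fun x hx y hy =>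
    (hmul_subset_hProd_append hx hy (hne v)).trans hprod
  by_cases hu : smulSet t (hPow u m) ⊆ rad A
  · exact .inl (hA.hmul_subset_rad_of_smulSet_hPow hm hu)
  · obtain ⟨x, hx, htx⟩ := not_forall₂.mp (mt smulSet_subset_iff.mpr hu)
    refine .inr (hA.hmul_subset_rad_of_smulSet_hPow hm (smulSet_subset_iff.mpr ?_))
    exact fun y hy => (hq x y (hxy x hx y hy)).resolve_left htx

end IsCHyperideal

lemma IsMCS.hPow_inter_nonempty {S : Set G} (hS : IsMCS S) {s : G} (hs : s ∈ S) {n : ℕ}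
    (hn : 1 ≤ n) : (hPow s n ∩ S).Nonempty := by
  induction n, hn using Nat.le_induction with
  | base => exact ⟨s, rfl, hs⟩
  | succ n hn ih =>
    obtain ⟨x, hx, hxS⟩ := ih
    obtain ⟨y, hy, hyS⟩ := hS.2 s hs x hxS
    exact ⟨y, by rw [hPow_succ s hn]; exact mem_smulSet.mpr ⟨x, hx, hy⟩, hyS⟩

lemma IsMCS.rad_inter_eq_empty {S A : Set G} (hS : IsMCS S) (hAS : A ∩ S = ∅) :
    rad A ∩ S = ∅ := by
  refine eq_empty_of_forall_notMem fun s ⟨⟨n, hn, hsn⟩, hs⟩ => ?_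
  obtain ⟨y, hy, hyS⟩ := hS.hPow_inter_nonempty hs hn
  exact hAS.subset ⟨hsn hy, hyS⟩

lemma IsMCS.isPrime_colon {S P : Set G} (hS : IsMCS S) (hP : IsHyperideal P) (hPS : P ∩ S = ∅)
    {t : G} (ht : t ∈ S) (hq : ∀ u v : G, hmul u v ⊆ P → hmul t u ⊆ P ∨ hmul t v ⊆ P) :
    IsPrime (colon P t) := by
  have httt : ¬ smulSet t (hmul t t) ⊆ P := by
    intro h
    obtain ⟨s, hs, hsS⟩ := hS.2 t ht t ht
    obtain ⟨r, hr, hrS⟩ := hS.2 t ht s hsS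
    exact hPS.subset ⟨h (mem_smulSet.mpr ⟨s, hs, hr⟩), hrS⟩
  refine ⟨hP.colon t, fun h => httt (hP.smulSet_subset t ?_), fun x y hxy => ?_⟩
  · exact mem_colon_iff.mp (h ▸ mem_univ t)
  · by_contra! hxy'
    rw [mem_colon_iff, mem_colon_iff] at hxy'
    -- `x ∘ (y ∘ t) = (x ∘ y) ∘ t ⊆ P`, so `t ∘ (y ∘ t) ⊆ P`, and then `t ∘ (t ∘ t) ⊆ P`.
    have hyt : ∀ w ∈ hmul y t, hmul t w ⊆ P := fun w hw =>
      (hq x w ((subset_biUnion_of_mem hw).trans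
        (by rw [← hmul_assoc]; exact iUnion₂_subset hxy))).resolve_left hxy'.1
    have htt : ∀ z ∈ hmul t t, hmul t z ⊆ P := fun z hz =>
      (hq y z ((subset_biUnion_of_mem hz).trans (by
        rw [← hmul_assoc]
        exact iUnion₂_subset fun w hw => hmul_comm w t ▸ hyt w hw))).resolve_left hxy'.2
    exact httt (smulSet_subset_iff.mpr htt)

lemma IsPrime.exists_mem_biInter_notMem {P B : Set G} (hP : IsPrime P) (hB : IsHyperideal B)
    {ι : Type*} {Q : ι → Set G} {s : Finset ι} (hs : s.Nonempty)
    (hQ : ∀ j ∈ s, IsHyperideal (Q j)) (h : ∀ j ∈ s, ∃ b ∈ B, b ∈ Q j ∧ b ∉ P) :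
    ∃ y ∈ B, y ∉ P ∧ ∀ j ∈ s, y ∈ Q j := by
  induction hs using Finset.Nonempty.cons_induction with
  | singleton a =>
    obtain ⟨b, hbB, hbQ, hbP⟩ := h a (Finset.mem_singleton_self a)
    exact ⟨b, hbB, hbP, fun j hj => Finset.mem_singleton.mp hj ▸ hbQ⟩
  | cons a s has hs ih =>
    obtain ⟨y, hyB, hyP, hyQ⟩ := ih (fun j hj => hQ j (Finset.mem_cons_of_mem hj))
      (fun j hj => h j (Finset.mem_cons_of_mem hj))
    obtain ⟨b, hbB, hbQ, hbP⟩ := h a (Finset.mem_cons_self a s)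
    obtain ⟨z, hz, hzP⟩ := not_subset.mp fun hyb => (hP.2.2 y b hyb).elim hyP hbP
    refine ⟨z, hB.hmul_subset y hbB hz, hzP, fun j hj => ?_⟩
    rcases Finset.mem_cons.mp hj with rfl | hj
    · exact (hQ j (Finset.mem_cons_self j s)).hmul_subset y hbQ hz
    · rw [hmul_comm] at hz
      exact (hQ j (Finset.mem_cons_of_mem hj)).hmul_subset b (hyQ j hj) hz

namespace IsHyperideal

variable {ι : Type*} [DecidableEq ι] {P : ι → Set G} {B : Set G} (hB : IsHyperideal B)
include hB

lemma exists_subset_biUnion_erase {s : Finset ι} (hP : ∀ i ∈ s, IsPrime (P i))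
    (h : B ⊆ ⋃ i ∈ s, P i) {i : ι} (hi : i ∈ s) (hs : (s.erase i).Nonempty) :
    ∃ j ∈ s, B ⊆ ⋃ k ∈ s.erase j, P k := by
  have hsplit : ∀ j ∈ s, B ⊆ P j ∪ ⋃ k ∈ s.erase j, P k := fun j hj => by
    rwa [← Finset.set_biUnion_insert, Finset.insert_erase hj]
  by_contra! hirr
  choose! b hbB hbn using fun j hj => not_subset.mp (hirr j hj)
  have hbP : ∀ j ∈ s, b j ∈ P j := fun j hj => (hsplit j hj (hbB j hj)).resolve_right (hbn j hj)
  obtain ⟨y, hyB, hyP, hyQ⟩ := (hP i hi).exists_mem_biInter_notMem hB hs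
    (fun j hj => (hP j (Finset.mem_of_mem_erase hj)).1) fun j hj =>
      ⟨b j, hbB j (Finset.mem_of_mem_erase hj), hbP j (Finset.mem_of_mem_erase hj), fun hbi =>
        hbn j (Finset.mem_of_mem_erase hj) (mem_biUnion (Finset.mem_erase.mpr
          ⟨(Finset.ne_of_mem_erase hj).symm, hi⟩) hbi)⟩
  -- `b i + y` lies in none of the `P k`.
  rcases hsplit i hi (hB.add_mem (hbB i hi) hyB) with hPi | hrest
  · exact hyP (by simpa using (hP i hi).1.sub_mem hPi (hbP i hi))
  · obtain ⟨k, hk, hkP⟩ := mem_iUnion₂.mp hrest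
    refine hbn i hi (mem_biUnion hk ?_)
    simpa using (hP k (Finset.mem_of_mem_erase hk)).1.sub_mem hkP (hyQ k hk)

lemma exists_subset_of_subset_biUnion (s : Finset ι) (hP : ∀ i ∈ s, IsPrime (P i))
    (h : B ⊆ ⋃ i ∈ s, P i) : ∃ i ∈ s, B ⊆ P i := by
  induction s using Finset.strongInduction with
  | H s ih =>
    obtain ⟨i, hi, -⟩ := mem_iUnion₂.mp (h hB.zero_mem)
    rcases (s.erase i).eq_empty_or_nonempty with hs | hs
    · refine ⟨i, hi, ?_⟩
      rwa [← Finset.insert_erase hi, hs, insert_empty_eq, Finset.set_biUnion_singleton] at h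
    · obtain ⟨j, hj, hBj⟩ := hB.exists_subset_biUnion_erase hP h hi hs
      obtain ⟨k, hk, hBk⟩ := ih _ (Finset.erase_ssubset hj)
        (fun k hk => hP k (Finset.mem_of_mem_erase hk)) hBj
      exact ⟨k, Finset.mem_of_mem_erase hk, hBk⟩

end IsHyperideal

end MulHyperring

open MulHyperring in
theorem quasiSPrimary_avoidance {G : Type*} [MulHyperring G] (S : Set G) (hS : IsMCS S)
    (k : ℕ) (A : Fin k → Set G) (hA : ∀ i, IsCHyperideal (A i))
    (hq : ∀ i, IsQuasiSPrimary S (A i)) (B : Set G) (hB : IsHyperideal B)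
    (hsub : B ⊆ ⋃ i, A i) :
    ∃ t ∈ S, ∃ j, smulSet t B ⊆ rad (A j) := by
  choose t htS ht using fun i => (hq i).2.2
  have hprime : ∀ i, IsPrime (colon (rad (A i)) (t i)) := fun i =>
    hS.isPrime_colon (hA i).1.rad (hS.rad_inter_eq_empty (hq i).2.1) (htS i)
      fun _ _ => (hA i).hmul_subset_rad_or_of_hmul_subset_rad (ht i)
  have hcover : B ⊆ ⋃ i ∈ Finset.univ, colon (rad (A i)) (t i) := fun x hx => by
    obtain ⟨i, hi⟩ := mem_iUnion.mp (hsub hx)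
    have htx := (ht i x x ((hA i).1.hmul_subset x hi)).elim id id
    exact mem_biUnion (Finset.mem_univ i) (mem_colon_iff.mpr htx)
  obtain ⟨j, -, hj⟩ := hB.exists_subset_of_subset_biUnion Finset.univ (fun i _ => hprime i) hcover
  exact ⟨t j, htS j, j, smulSet_subset_iff_subset_colon.mpr hj⟩
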